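/- arXiv:math/0703422 — 5 statements merged into one kernel-verified Lean document; each statement's English description precedes it below -/
import Mathlib

section
/- Let R be a commutative ring and let ∂_x and ∂_t be two commuting derivations on R. Let A and Y be n×n matrices over R with ∂_x Y = A·Y. Fix i ≥ 0 and define (i+1)n×(i+1)n block matrices, with blocks indexed by p,q ∈ {0,…,i}: A_i has (p,q)-block equal to C(p,q)·∂_t^{p−q}A for q ≤ p and 0 otherwise, and Y_i has (p,q)-block equal to C(p,q)·∂_t^{p−q}Y for q ≤ p and 0 otherwise. Then ∂_x Y_i = A_i·Y_i; moreover, if Y is invertible then Y_i is invertible. -/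
/-!
By the general Leibniz rule, `a ↦ (C(p,q) • ∂ₜ^(p-q) a)_{p,q}` is a ring homomorphism from any
ring with a derivation `∂ₜ` into lower triangular `(i+1) × (i+1)` matrices over it. Applied to the
ring of `n × n` matrices with `∂ₜ` acting entrywise, and flattened into block matrices, it is a ring
homomorphism `Φ` with `Φ A = Aᵢ` and `Φ Y = Yᵢ`. As `∂ₓ` commutes with `∂ₜ` it commutes with `Φ`,
so `∂ₓ Yᵢ = Φ (∂ₓ Y) = Φ (A * Y) = Aᵢ * Yᵢ`; and `Φ` maps units to units.
-/

open Finset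

/-- Mathlib's `Derivation` lives on commutative algebras; this one also covers matrix rings. -/
def IsDerivation {S : Type*} [Semiring S] (D : AddMonoid.End S) : Prop :=
  ∀ a b : S, D (a * b) = D a * b + a * D b

namespace IsDerivation

section Ring

variable {S : Type*} [Ring S] {D : AddMonoid.End S}

theorem map_one (hD : IsDerivation D) : D 1 = 0 := by
  simpa using hD 1 1

theorem pow_apply_one (hD : IsDerivation D) {k : ℕ} (hk : k ≠ 0) : (D ^ k) 1 = 0 := by
  obtain ⟨k, rfl⟩ := Nat.exists_eq_succ_of_ne_zero hk
  rw [pow_succ, AddMonoid.End.coe_mul, Function.comp_apply, hD.map_one, map_zero]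

end Ring

variable {S : Type*} [Semiring S] {D : AddMonoid.End S}

theorem pow_apply_mul (hD : IsDerivation D) (m : ℕ) (a b : S) :
    (D ^ m) (a * b) = ∑ jk ∈ antidiagonal m, m.choose jk.1 • ((D ^ jk.1) a * (D ^ jk.2) b) := by
  induction m with
  | zero => simp
  | succ m ih =>
    rw [sum_antidiagonal_choose_succ_nsmul (fun j k => (D ^ j) a * (D ^ k) b), pow_succ',
      AddMonoid.End.coe_mul, Function.comp_apply, ih, map_sum, ← sum_add_distrib]
    refine sum_congr rfl fun jk hjk => ?_
    rw [HasAntidiagonal.mem_antidiagonal] at hjk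
    rw [map_nsmul, hD, smul_add, add_comm, Nat.choose_symm_of_eq_add hjk.symm, pow_succ',
      pow_succ']
    rfl

theorem sum_Icc_choose_mul (hD : IsDerivation D) {p q : ℕ} (hqp : q ≤ p) (a b : S) :
    ∑ r ∈ Icc q p, (p.choose r * r.choose q) • ((D ^ (p - r)) a * (D ^ (r - q)) b) =
      p.choose q • (D ^ (p - q)) (a * b) := by
  rw [hD.pow_apply_mul, smul_sum]
  refine sum_nbij' (fun r => (p - r, r - q)) (fun jk => q + jk.2) ?_ ?_ ?_ ?_ ?_ <;>
    simp only [mem_Icc, HasAntidiagonal.mem_antidiagonal, Prod.forall, Prod.mk.injEq]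
  · omega
  · omega
  · omega
  · omega
  · intro r hr
    rw [Nat.choose_mul hr.1, Nat.choose_symm_of_eq_add (by omega : p - q = (r - q) + (p - r)),
      mul_smul]

end IsDerivation

section Prolongation

variable {S : Type*} [AddCommMonoid S] (D : AddMonoid.End S) (m : ℕ)

def prolong (a : S) : Matrix (Fin m) (Fin m) S :=
  Matrix.of fun p q => if (q : ℕ) ≤ p then (p : ℕ).choose q • (D ^ ((p : ℕ) - q)) a else 0

theorem prolong_apply (a : S) (p q : Fin m) :
    prolong D m a p q = if (q : ℕ) ≤ p then (p : ℕ).choose q • (D ^ ((p : ℕ) - q)) a else 0 :=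
  rfl

theorem prolong_add (a b : S) : prolong D m (a + b) = prolong D m a + prolong D m b := by
  ext p q
  simp only [prolong_apply, Matrix.add_apply, map_add, smul_add]
  split_ifs <;> simp

variable {D}

theorem prolong_map {E : AddMonoid.End S} (hED : Commute E D) (a : S) :
    (prolong D m a).map E = prolong D m (E a) := by
  ext p q
  simp only [Matrix.map_apply, prolong_apply]
  split_ifs
  · rw [map_nsmul]
    exact congrArg _ (DFunLike.congr_fun (hED.pow_right _).eq a)
  · exact map_zero E

end Prolongation

section ProlongationRingHom

variable {S : Type*} [Ring S] {D : AddMonoid.End S} (m : ℕ)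

theorem prolong_one (hD : IsDerivation D) : prolong D m (1 : S) = 1 := by
  ext p q
  rw [prolong_apply, Matrix.one_apply]
  obtain rfl | hpq := eq_or_ne p q
  · simp
  have hpq' : (p : ℕ) ≠ q := Fin.val_ne_of_ne hpq
  rw [if_neg hpq]
  split_ifs with hqp
  · rw [hD.pow_apply_one (by omega), smul_zero]
  · rfl

theorem prolong_mul (hD : IsDerivation D) (a b : S) :
    prolong D m (a * b) = prolong D m a * prolong D m b := by
  ext p q
  set g : ℕ → S := fun r => if r ∈ Icc (q : ℕ) p then
      ((p : ℕ).choose r * r.choose q) • ((D ^ ((p : ℕ) - r)) a * (D ^ (r - q)) b) else 0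
  have hterm : ∀ r : Fin m, prolong D m a p r * prolong D m b r q = g r := by
    intro r
    simp only [g, prolong_apply, mem_Icc]
    split_ifs <;> first | omega | simp only [mul_zero, zero_mul] | rw [smul_mul_smul_comm]
  have hIcc : Icc (q : ℕ) p ⊆ range m := fun r hr => mem_range.2 ((mem_Icc.1 hr).2.trans_lt p.2)
  rw [Matrix.mul_apply, Fintype.sum_congr _ _ hterm, Fin.sum_univ_eq_sum_range g, sum_ite_mem,
    inter_eq_right.2 hIcc, prolong_apply]
  split_ifs with hqp
  · exact (hD.sum_Icc_choose_mul hqp a b).symm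
  · rw [Icc_eq_empty hqp, sum_empty]

def prolongRingHom (hD : IsDerivation D) : S →+* Matrix (Fin m) (Fin m) S where
  toFun := prolong D m
  map_one' := prolong_one m hD
  map_mul' := prolong_mul m hD
  map_zero' := by ext; simp [prolong_apply]
  map_add' := prolong_add D m

end ProlongationRingHom

section MatrixDerivation

variable {R : Type*} {n : Type*}

def AddMonoid.End.mapMatrix [AddCommMonoid R] (f : AddMonoid.End R) :
    AddMonoid.End (Matrix n n R) :=
  AddMonoidHom.mapMatrix f

theorem AddMonoid.End.mapMatrix_apply [AddCommMonoid R] (f : AddMonoid.End R) (M : Matrix n n R) :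
    f.mapMatrix M = M.map f :=
  rfl

theorem AddMonoid.End.mapMatrix_pow [AddCommMonoid R] (f : AddMonoid.End R) (k : ℕ) :
    (f.mapMatrix : AddMonoid.End (Matrix n n R)) ^ k = (f ^ k).mapMatrix := by
  induction k with
  | zero => rfl
  | succ k ih => rw [pow_succ, pow_succ, ih]; rfl

theorem Commute.mapMatrix [AddCommMonoid R] {E D : AddMonoid.End R} (h : Commute E D) :
    Commute (E.mapMatrix : AddMonoid.End (Matrix n n R)) D.mapMatrix := by
  ext M i j
  exact DFunLike.congr_fun h (M i j)

theorem IsDerivation.mapMatrix [Semiring R] [Fintype n] [DecidableEq n] {D : AddMonoid.End R}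
    (hD : IsDerivation D) : IsDerivation (D.mapMatrix : AddMonoid.End (Matrix n n R)) := by
  intro M N
  ext i j
  simp only [AddMonoid.End.mapMatrix_apply, Matrix.map_apply, Matrix.add_apply, Matrix.mul_apply,
    map_sum, ← sum_add_distrib]
  exact sum_congr rfl fun k _ => hD _ _

end MatrixDerivation

section BlockProlongation

variable {R : Type*} [Ring R] {n : Type*} [Fintype n] [DecidableEq n] {D : AddMonoid.End R}
  (m : ℕ)

def blockProlong (hD : IsDerivation D) : Matrix n n R →+* Matrix (Fin m × n) (Fin m × n) R :=
  (Matrix.compRingEquiv (Fin m) n R).toRingHom.comp (prolongRingHom m hD.mapMatrix)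

theorem blockProlong_apply (hD : IsDerivation D) (M : Matrix n n R) (p q : Fin m × n) :
    blockProlong m hD M p q =
      if (q.1 : ℕ) ≤ p.1 then (p.1 : ℕ).choose q.1 • D^[(p.1 : ℕ) - q.1] (M p.2 q.2) else 0 := by
  change prolong D.mapMatrix m M p.1 q.1 p.2 q.2 = _
  rw [prolong_apply]
  split_ifs
  · rw [AddMonoid.End.mapMatrix_pow, Matrix.smul_apply, AddMonoid.End.mapMatrix_apply,
      Matrix.map_apply, AddMonoid.End.coe_pow]
  · rfl

theorem blockProlong_map (hD : IsDerivation D) {E : AddMonoid.End R} (hED : Commute E D)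
    (M : Matrix n n R) : (blockProlong m hD M).map E = blockProlong m hD (M.map E) := by
  change (Matrix.comp _ _ _ _ R (prolong D.mapMatrix m M)).map E =
    Matrix.comp _ _ _ _ R (prolong D.mapMatrix m (E.mapMatrix M))
  rw [← Matrix.comp_map_map, ← prolong_map m hED.mapMatrix]
  rfl

end BlockProlongation

theorem stmt_1_general {R : Type*} [CommRing R] {n : ℕ}
    (Dx Dt : R → R)
    (hx_add : ∀ a b : R, Dx (a + b) = Dx a + Dx b)
    (ht_add : ∀ a b : R, Dt (a + b) = Dt a + Dt b)
    (ht_leibniz : ∀ a b : R, Dt (a * b) = Dt a * b + a * Dt b)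
    (hcomm : ∀ a : R, Dx (Dt a) = Dt (Dx a))
    (A Y : Matrix (Fin n) (Fin n) R)
    (hY : Y.map Dx = A * Y)
    (i : ℕ)
    (Ai Yi : Matrix (Fin (i + 1) × Fin n) (Fin (i + 1) × Fin n) R)
    (hAi : ∀ p q : Fin (i + 1) × Fin n,
      Ai p q = if (q.1 : ℕ) ≤ (p.1 : ℕ) then
          ((p.1 : ℕ).choose (q.1 : ℕ)) • (Dt^[(p.1 : ℕ) - (q.1 : ℕ)] (A p.2 q.2)) else 0)
    (hYi : ∀ p q : Fin (i + 1) × Fin n,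
      Yi p q = if (q.1 : ℕ) ≤ (p.1 : ℕ) then
          ((p.1 : ℕ).choose (q.1 : ℕ)) • (Dt^[(p.1 : ℕ) - (q.1 : ℕ)] (Y p.2 q.2)) else 0) :
    Yi.map Dx = Ai * Yi ∧ (IsUnit Y → IsUnit Yi) := by
  let δx : AddMonoid.End R := AddMonoidHom.mk' Dx hx_add
  let δt : AddMonoid.End R := AddMonoidHom.mk' Dt ht_add
  have hDt : IsDerivation δt := ht_leibniz
  have hcomm' : Commute δx δt := AddMonoidHom.ext hcomm
  let Φ := blockProlong (n := Fin n) (i + 1) hDt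
  have hAΦ : Ai = Φ A := Matrix.ext fun p q => by rw [hAi, blockProlong_apply]; rfl
  have hYΦ : Yi = Φ Y := Matrix.ext fun p q => by rw [hYi, blockProlong_apply]; rfl
  subst hAΦ hYΦ
  refine ⟨?_, fun hunit => hunit.map Φ⟩
  rw [← map_mul, ← hY]
  exact blockProlong_map (i + 1) hDt hcomm' Y

/-- given commuting derivations `∂ₓ, ∂ₜ` on a commutative ring `R` and
`∂ₓ Y = A * Y`, the `i`-th prolongation matrices `Aᵢ, Yᵢ` (block matrices with
`(p,q)`-block `C(p,q) • ∂ₜ^{p-q} A`, resp. `C(p,q) • ∂ₜ^{p-q} Y`, for `q ≤ p` and `0`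
otherwise) satisfy `∂ₓ Yᵢ = Aᵢ * Yᵢ`; moreover if `Y` is invertible then so is `Yᵢ`. -/
theorem stmt_1 {R : Type*} [CommRing R] {n : ℕ}
    (Dx Dt : R → R)
    (hx_add : ∀ a b : R, Dx (a + b) = Dx a + Dx b)
    (hx_leibniz : ∀ a b : R, Dx (a * b) = Dx a * b + a * Dx b)
    (ht_add : ∀ a b : R, Dt (a + b) = Dt a + Dt b)
    (ht_leibniz : ∀ a b : R, Dt (a * b) = Dt a * b + a * Dt b)
    (hcomm : ∀ a : R, Dx (Dt a) = Dt (Dx a))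
    (A Y : Matrix (Fin n) (Fin n) R)
    (hY : Y.map Dx = A * Y)
    (i : ℕ)
    (Ai Yi : Matrix (Fin (i + 1) × Fin n) (Fin (i + 1) × Fin n) R)
    (hAi : ∀ p q : Fin (i + 1) × Fin n,
      Ai p q = if (q.1 : ℕ) ≤ (p.1 : ℕ) then
          ((p.1 : ℕ).choose (q.1 : ℕ)) • (Dt^[(p.1 : ℕ) - (q.1 : ℕ)] (A p.2 q.2)) else 0)
    (hYi : ∀ p q : Fin (i + 1) × Fin n,
      Yi p q = if (q.1 : ℕ) ≤ (p.1 : ℕ) then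
          ((p.1 : ℕ).choose (q.1 : ℕ)) • (Dt^[(p.1 : ℕ) - (q.1 : ℕ)] (Y p.2 q.2)) else 0) :
    Yi.map Dx = Ai * Yi ∧ (IsUnit Y → IsUnit Yi) :=
  stmt_1_general Dx Dt hx_add ht_add ht_leibniz hcomm A Y hY i Ai Yi hAi hYi
end

section
/- Let R be a commutative ℚ-algebra with a derivation ∂_t, let A be an n×n matrix over R, and fix i ≥ 0. Define (i+1)n×(i+1)n block matrices with blocks indexed by p,q ∈ {0,…,i}: Ã_i has (p,q)-block C(i−q, p−q)·∂_t^{p−q}A for q ≤ p and 0 otherwise; A_i has (p,q)-block C(p,q)·∂_t^{p−q}A for q ≤ p and 0 otherwise; and D is the block diagonal matrix whose (p,p)-block is C(i,p)·I_n (I_n the n×n identity). Then D is invertible, all entries of D are integer multiples of 1 (hence annihilated by every derivation on R), and Ã_i·D = D·A_i; consequently A_i = D^{-1}·Ã_i·D. -/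
/-!
Conjugating by `D` multiplies the `(p,q)`-block of `Ãᵢ` by `C(i,q)` and that of `Aᵢ` by
`C(i,p)`, so `Ãᵢ D = D Aᵢ` is the subset-of-a-subset identity
`C(i,p) C(p,q) = C(i,q) C(i-q, p-q)`. The binomial coefficients `C(i,p)` with `p ≤ i` are
nonzero naturals, hence units in a `ℚ`-algebra, and derivations kill natural numbers.
-/

lemma map_natCast_eq_zero_of_leibniz {R : Type*} [NonAssocRing R] (d : R → R)
    (hadd : ∀ a b : R, d (a + b) = d a + d b)
    (hmul : ∀ a b : R, d (a * b) = d a * b + a * d b) (m : ℕ) :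
    d (m : R) = 0 := by
  have hone : d 1 = 0 := by simpa using hmul 1 1
  calc d (m : R) = AddMonoidHom.mk' d hadd (m • 1) := by simp
    _ = 0 := by rw [map_nsmul, AddMonoidHom.mk'_apply, hone, smul_zero]

lemma isUnit_natCast_of_ne_zero {R : Type*} [Semiring R] [Algebra ℚ R] {m : ℕ} (hm : m ≠ 0) :
    IsUnit (m : R) := by
  simpa using (IsUnit.mk0 (m : ℚ) (Nat.cast_ne_zero.mpr hm)).map (algebraMap ℚ R)

lemma choose_mul_choose_eq {i p q : ℕ} (hqp : q ≤ p) :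
    (i - q).choose (p - q) * i.choose q = i.choose p * p.choose q := by
  rw [Nat.choose_mul hqp, mul_comm]

theorem stmt_2_general {R : Type*} [CommRing R] [Algebra ℚ R] {n : ℕ}
    (Dt : R → R)
    (A : Matrix (Fin n) (Fin n) R)
    (i : ℕ)
    (Atilde Ai D : Matrix (Fin (i + 1) × Fin n) (Fin (i + 1) × Fin n) R)
    (hAtilde : ∀ p q : Fin (i + 1) × Fin n,
      Atilde p q = if (q.1 : ℕ) ≤ (p.1 : ℕ) then
          ((i - (q.1 : ℕ)).choose ((p.1 : ℕ) - (q.1 : ℕ))) •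
            (Dt^[(p.1 : ℕ) - (q.1 : ℕ)] (A p.2 q.2)) else 0)
    (hAi : ∀ p q : Fin (i + 1) × Fin n,
      Ai p q = if (q.1 : ℕ) ≤ (p.1 : ℕ) then
          ((p.1 : ℕ).choose (q.1 : ℕ)) • (Dt^[(p.1 : ℕ) - (q.1 : ℕ)] (A p.2 q.2)) else 0)
    (hD : D = Matrix.diagonal (fun p : Fin (i + 1) × Fin n => ((i.choose (p.1 : ℕ) : ℕ) : R))) :
    IsUnit D ∧
    (∀ p q : Fin (i + 1) × Fin n, ∃ z : ℤ, D p q = (z : R)) ∧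
    (∀ d : R → R, (∀ a b : R, d (a + b) = d a + d b) →
      (∀ a b : R, d (a * b) = d a * b + a * d b) →
      ∀ p q : Fin (i + 1) × Fin n, d (D p q) = 0) ∧
    Atilde * D = D * Ai ∧
    Ai = D⁻¹ * Atilde * D := by
  have hunit : IsUnit D := by
    rw [hD, Matrix.isUnit_diagonal, Pi.isUnit_iff]
    exact fun p => isUnit_natCast_of_ne_zero (Nat.choose_pos (Nat.lt_succ_iff.mp p.1.isLt)).ne'
  have hnat : ∀ p q, ∃ m : ℕ, D p q = (m : R) := fun p q =>
    ⟨if p = q then i.choose (p.1 : ℕ) else 0, by rw [hD, Matrix.diagonal_apply, Nat.cast_ite,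
      Nat.cast_zero]⟩
  have hcomm : Atilde * D = D * Ai := by
    ext p q
    rw [hD, Matrix.mul_diagonal, Matrix.diagonal_mul, hAtilde, hAi]
    split_ifs with hqp
    · have hchoose := congrArg (Nat.cast : ℕ → R) (choose_mul_choose_eq (i := i) hqp)
      push_cast at hchoose
      simp only [nsmul_eq_mul]
      linear_combination (Dt^[(p.1 : ℕ) - (q.1 : ℕ)] (A p.2 q.2)) * hchoose
    · simp
  refine ⟨hunit, fun p q => ?_, fun d hadd hmul p q => ?_, hcomm, ?_⟩
  · obtain ⟨m, hm⟩ := hnat p q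
    exact ⟨m, by rw [hm, Int.cast_natCast]⟩
  · obtain ⟨m, hm⟩ := hnat p q
    rw [hm, map_natCast_eq_zero_of_leibniz d hadd hmul]
  · rw [Matrix.mul_assoc, hcomm,
      Matrix.nonsing_inv_mul_cancel_left _ _ ((Matrix.isUnit_iff_isUnit_det D).mp hunit)]

/-- over a commutative `ℚ`-algebra `R` with derivation `∂ₜ`, the prolongation
matrix `Ãᵢ` (blocks `C(i-q, p-q) • ∂ₜ^{p-q} A`) and `Aᵢ` (blocks `C(p,q) • ∂ₜ^{p-q} A`) are
conjugate by the invertible constant block-diagonal matrix `D` with `(p,p)`-block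
`C(i,p) • Iₙ`: all entries of `D` are integer multiples of `1` (hence killed by every
derivation), `Ãᵢ * D = D * Aᵢ`, and `Aᵢ = D⁻¹ * Ãᵢ * D`. -/
theorem stmt_2 {R : Type*} [CommRing R] [Algebra ℚ R] {n : ℕ}
    (Dt : R → R)
    (ht_add : ∀ a b : R, Dt (a + b) = Dt a + Dt b)
    (ht_leibniz : ∀ a b : R, Dt (a * b) = Dt a * b + a * Dt b)
    (A : Matrix (Fin n) (Fin n) R)
    (i : ℕ)
    (Atilde Ai D : Matrix (Fin (i + 1) × Fin n) (Fin (i + 1) × Fin n) R)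
    (hAtilde : ∀ p q : Fin (i + 1) × Fin n,
      Atilde p q = if (q.1 : ℕ) ≤ (p.1 : ℕ) then
          ((i - (q.1 : ℕ)).choose ((p.1 : ℕ) - (q.1 : ℕ))) •
            (Dt^[(p.1 : ℕ) - (q.1 : ℕ)] (A p.2 q.2)) else 0)
    (hAi : ∀ p q : Fin (i + 1) × Fin n,
      Ai p q = if (q.1 : ℕ) ≤ (p.1 : ℕ) then
          ((p.1 : ℕ).choose (q.1 : ℕ)) • (Dt^[(p.1 : ℕ) - (q.1 : ℕ)] (A p.2 q.2)) else 0)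
    (hD : D = Matrix.diagonal (fun p : Fin (i + 1) × Fin n => ((i.choose (p.1 : ℕ) : ℕ) : R))) :
    IsUnit D ∧
    (∀ p q : Fin (i + 1) × Fin n, ∃ z : ℤ, D p q = (z : R)) ∧
    (∀ d : R → R, (∀ a b : R, d (a + b) = d a + d b) →
      (∀ a b : R, d (a * b) = d a * b + a * d b) →
      ∀ p q : Fin (i + 1) × Fin n, d (D p q) = 0) ∧
    Atilde * D = D * Ai ∧
    Ai = D⁻¹ * Atilde * D :=
  stmt_2_general Dt A i Atilde Ai D hAtilde hAi hD
end

section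
/- Let 0 → L → M → N → 0 be a short exact sequence of differential modules over 𝕂, where the maps are 𝕂-linear and commute with the respective operators D. Assume that L, M, and N each have a full solution space. Then the induced sequence of k-vector spaces 0 → Sol(L) → Sol(M) → Sol(N) → 0, whose maps are the restrictions of id_K ⊗ (the given maps), is exact. -/
/-!
Tensoring with `K` is exact because `K` is flat over the field `𝕂`, and `id_K ⊗ f`, `id_K ⊗ g`
commute with the operators `D_K`, so they map solutions to solutions. Since `id_K ⊗ f` is
injective, a solution of `K ⊗ M` in the kernel of `id_K ⊗ g` is the image of a solution of
`K ⊗ L`: the sequence of solution spaces is exact except possibly at `Sol(N)`. There,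
surjectivity is a dimension count: `dim Sol(M) = dim M = dim L + dim N = dim Sol(L) + dim Sol(N)`.
-/

open TensorProduct Function Module

section BaseChange

variable {R K X Y : Type*} [CommSemiring R] [AddCommMonoid K] [Module R K]
  [AddCommMonoid X] [Module R X] [AddCommMonoid Y] [Module R Y]

theorem LinearMap.lTensor_comp_eq_of_tmul (δ : K → K) {DX : X → X} {DY : Y → Y}
    (f : X →ₗ[R] Y) (hf : ∀ x, f (DX x) = DY (f x))
    (DKX : K ⊗[R] X →+ K ⊗[R] X) (hDKX : ∀ c x, DKX (c ⊗ₜ x) = δ c ⊗ₜ x + c ⊗ₜ DX x)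
    (DKY : K ⊗[R] Y →+ K ⊗[R] Y) (hDKY : ∀ c y, DKY (c ⊗ₜ y) = δ c ⊗ₜ y + c ⊗ₜ DY y)
    (z : K ⊗[R] X) : f.lTensor K (DKX z) = DKY (f.lTensor K z) := by
  induction z using TensorProduct.induction_on with
  | zero => simp
  | tmul c x => simp [hDKX, hDKY, hf]
  | add z w hz hw => simp [hz, hw]

end BaseChange

section Exact

variable {R A B C : Type*} [Ring R] [AddCommGroup A] [Module R A]
  [AddCommGroup B] [Module R B] [AddCommGroup C] [Module R C]

theorem Function.Exact.linearMap_restrict {F : A →ₗ[R] B} {G : B →ₗ[R] C} (hex : Exact F G)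
    {SA : Submodule R A} {SB : Submodule R B} {SC : Submodule R C}
    (hF : ∀ x ∈ SA, F x ∈ SB) (hG : ∀ y ∈ SB, G y ∈ SC) (hF_mem : ∀ x, F x ∈ SB → x ∈ SA) :
    Exact (F.restrict hF) (G.restrict hG) := by
  rintro ⟨y, hy⟩
  simp only [LinearMap.restrict_apply, Set.mem_range, Subtype.ext_iff, ZeroMemClass.coe_zero,
    Subtype.exists]
  rw [hex y]
  exact ⟨fun ⟨x, hx⟩ => ⟨x, hF_mem x (hx ▸ hy), hx⟩, fun ⟨x, _, hx⟩ => ⟨x, hx⟩⟩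

variable {k : Type*} [DivisionRing k] [Module k A] [Module k B] [Module k C]

theorem Function.Exact.finrank_eq_add_finrank_range [FiniteDimensional k B]
    {ψ : A →ₗ[k] B} {φ : B →ₗ[k] C} (hex : Exact ψ φ) (hψ : Injective ψ) :
    finrank k B = finrank k A + finrank k (LinearMap.range φ) := by
  rw [← φ.finrank_range_add_finrank_ker, hex.linearMap_ker_eq, LinearMap.finrank_range_of_inj hψ,
    add_comm]

theorem Function.Exact.finrank_eq_add_of_surjective [FiniteDimensional k B]
    {ψ : A →ₗ[k] B} {φ : B →ₗ[k] C} (hex : Exact ψ φ) (hψ : Injective ψ) (hφ : Surjective φ) :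
    finrank k B = finrank k A + finrank k C := by
  rw [hex.finrank_eq_add_finrank_range hψ, LinearMap.range_eq_top.mpr hφ, finrank_top]

theorem Function.Exact.surjective_of_finrank_eq_add [FiniteDimensional k B]
    [FiniteDimensional k C] {ψ : A →ₗ[k] B} {φ : B →ₗ[k] C} (hex : Exact ψ φ) (hψ : Injective ψ)
    (h : finrank k B = finrank k A + finrank k C) : Surjective φ := by
  rw [← LinearMap.range_eq_top]
  apply Submodule.eq_top_of_finrank_eq
  have := hex.finrank_eq_add_finrank_range hψ
  omega

end Exact

theorem finiteDimensional_of_finrank_eq_finrank {R K X : Type*} [Field R] [Field K] [Algebra R K]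
    (k : Subfield K) [AddCommGroup X] [Module R X] [FiniteDimensional R X]
    (S : Submodule k (K ⊗[R] X)) (h : finrank k S = finrank R X) : FiniteDimensional k S := by
  rcases (finrank R X).eq_zero_or_pos with h0 | hpos
  · have : Subsingleton X := finrank_zero_iff.mp h0
    infer_instance
  · exact FiniteDimensional.of_finrank_pos (h ▸ hpos)

theorem stmt_4_general {K 𝕂 : Type*} [Field K] [Field 𝕂] [Algebra 𝕂 K]
    (δ : K → K)
    -- k is the field of constants of δ
    (k : Subfield K)
    -- the differential modules L, M, N over 𝕂
    {L M N : Type*}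
    [AddCommGroup L] [Module 𝕂 L]
    [AddCommGroup M] [Module 𝕂 M] [FiniteDimensional 𝕂 M]
    [AddCommGroup N] [Module 𝕂 N] [FiniteDimensional 𝕂 N]
    (DL : L → L)
    (DM : M → M)
    (DN : N → N)
    -- a short exact sequence of differential modules
    (f : L →ₗ[𝕂] M) (g : M →ₗ[𝕂] N)
    (hfD : ∀ x : L, f (DL x) = DM (f x))
    (hgD : ∀ x : M, g (DM x) = DN (g x))
    (hf_inj : Function.Injective f)
    (hexact : LinearMap.range f = LinearMap.ker g)
    (hg_surj : Function.Surjective g)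
    -- the operators D_K on K ⊗ L, K ⊗ M, K ⊗ N
    (DKL : K ⊗[𝕂] L → K ⊗[𝕂] L)
    (hDKL_add : ∀ x y, DKL (x + y) = DKL x + DKL y)
    (hDKL : ∀ (c : K) (x : L), DKL (c ⊗ₜ[𝕂] x) = δ c ⊗ₜ[𝕂] x + c ⊗ₜ[𝕂] DL x)
    (DKM : K ⊗[𝕂] M → K ⊗[𝕂] M)
    (hDKM_add : ∀ x y, DKM (x + y) = DKM x + DKM y)
    (hDKM : ∀ (c : K) (x : M), DKM (c ⊗ₜ[𝕂] x) = δ c ⊗ₜ[𝕂] x + c ⊗ₜ[𝕂] DM x)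
    (DKN : K ⊗[𝕂] N → K ⊗[𝕂] N)
    (hDKN_add : ∀ x y, DKN (x + y) = DKN x + DKN y)
    (hDKN : ∀ (c : K) (x : N), DKN (c ⊗ₜ[𝕂] x) = δ c ⊗ₜ[𝕂] x + c ⊗ₜ[𝕂] DN x)
    -- the solution spaces, as k-vector spaces
    (SL : Submodule k (K ⊗[𝕂] L)) (hSL : ∀ x, x ∈ SL ↔ DKL x = 0)
    (SM : Submodule k (K ⊗[𝕂] M)) (hSM : ∀ x, x ∈ SM ↔ DKM x = 0)
    (SN : Submodule k (K ⊗[𝕂] N)) (hSN : ∀ x, x ∈ SN ↔ DKN x = 0)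
    -- L, M, N have full solution spaces
    (hfullL : Module.finrank k SL = Module.finrank 𝕂 L)
    (hfullM : Module.finrank k SM = Module.finrank 𝕂 M)
    (hfullN : Module.finrank k SN = Module.finrank 𝕂 N) :
    -- the induced maps restrict to the solution spaces ...
    (∀ x ∈ SL, LinearMap.lTensor K f x ∈ SM) ∧
    (∀ y ∈ SM, LinearMap.lTensor K g y ∈ SN) ∧
    -- ... and give an exact sequence 0 → Sol(L) → Sol(M) → Sol(N) → 0
    (∀ x ∈ SL, LinearMap.lTensor K f x = 0 → x = 0) ∧
    (∀ y ∈ SM, (LinearMap.lTensor K g y = 0 ↔ ∃ x ∈ SL, LinearMap.lTensor K f x = y)) ∧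
    (∀ z ∈ SN, ∃ y ∈ SM, LinearMap.lTensor K g y = z) := by
  have hDf : ∀ z, f.lTensor K (DKL z) = DKM (f.lTensor K z) :=
    f.lTensor_comp_eq_of_tmul δ hfD (.mk' DKL hDKL_add) hDKL (.mk' DKM hDKM_add) hDKM
  have hDg : ∀ z, g.lTensor K (DKM z) = DKN (g.lTensor K z) :=
    g.lTensor_comp_eq_of_tmul δ hgD (.mk' DKM hDKM_add) hDKM (.mk' DKN hDKN_add) hDKN
  have hexact𝕂 : Exact f g := LinearMap.exact_iff.mpr hexact.symm
  have hfK_inj : Injective (f.lTensor K) := Flat.lTensor_preserves_injective_linearMap f hf_inj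
  have hexactK : Exact (f.lTensor K) (g.lTensor K) := Flat.lTensor_exact K hexact𝕂
  have hf_maps : ∀ x ∈ SL, f.lTensor K x ∈ SM := fun x hx => by
    rw [hSM, ← hDf, (hSL x).mp hx, map_zero]
  have hg_maps : ∀ y ∈ SM, g.lTensor K y ∈ SN := fun y hy => by
    rw [hSN, ← hDg, (hSM y).mp hy, map_zero]
  have hf_mem : ∀ x, f.lTensor K x ∈ SM → x ∈ SL := fun x hx => by
    rw [hSL]
    apply hfK_inj
    rw [hDf, (hSM _).mp hx, map_zero]
  -- `f.baseChange K` is `f.lTensor K` as a function, but `K`-linear, hence `k`-linear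
  let fS : SL →ₗ[k] SM := ((f.baseChange K).restrictScalars k).restrict hf_maps
  let gS : SM →ₗ[k] SN := ((g.baseChange K).restrictScalars k).restrict hg_maps
  have hfS_inj : Injective fS := fun x y h => Subtype.ext (hfK_inj (congrArg Subtype.val h))
  have hexactS : Exact fS gS :=
    hexactK.linearMap_restrict (F := (f.baseChange K).restrictScalars k)
      (G := (g.baseChange K).restrictScalars k) hf_maps hg_maps hf_mem
  have := finiteDimensional_of_finrank_eq_finrank k SM hfullM
  have := finiteDimensional_of_finrank_eq_finrank k SN hfullN
  have hdim : finrank k SM = finrank k SL + finrank k SN := by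
    rw [hfullL, hfullM, hfullN, hexact𝕂.finrank_eq_add_of_surjective hf_inj hg_surj]
  have hgS_surj : Surjective gS :=
    Exact.surjective_of_finrank_eq_add (A := SL) (B := SM) (C := SN) hexactS hfS_inj hdim
  refine ⟨hf_maps, hg_maps, fun x _ hx => hfK_inj (hx.trans (map_zero _).symm),
    fun y hy => (hexactK y).trans ⟨fun ⟨x, hx⟩ => ⟨x, hf_mem x (hx ▸ hy), hx⟩,
      fun ⟨x, _, hx⟩ => ⟨x, hx⟩⟩, fun z hz => ?_⟩
  obtain ⟨y, hy⟩ := hgS_surj ⟨z, hz⟩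
  exact ⟨y, y.2, congrArg Subtype.val hy⟩

/-- let `K/𝕂` be fields of characteristic zero with a derivation `δ` on `K`
restricting to `𝕂`, and `k = ker δ` the constants. Given a short exact sequence
`0 → L → M → N → 0` of differential `𝕂`-modules whose maps commute with the operators `D`,
and assuming each of `L, M, N` has a full solution space (`dim_k Sol = dim_𝕂`), the induced
sequence `0 → Sol(L) → Sol(M) → Sol(N) → 0` (with maps the restrictions of `id_K ⊗ f`,
`id_K ⊗ g`) is exact. -/
theorem stmt_4 {K 𝕂 : Type*} [Field K] [Field 𝕂] [Algebra 𝕂 K] [CharZero K]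
    (δ : K → K)
    (hδ_add : ∀ a b : K, δ (a + b) = δ a + δ b)
    (hδ_leibniz : ∀ a b : K, δ (a * b) = δ a * b + a * δ b)
    (δ𝕂 : 𝕂 → 𝕂)
    (hcompat : ∀ a : 𝕂, δ (algebraMap 𝕂 K a) = algebraMap 𝕂 K (δ𝕂 a))
    -- k is the field of constants of δ
    (k : Subfield K) (hk : ∀ c : K, c ∈ k ↔ δ c = 0)
    -- the differential modules L, M, N over 𝕂
    {L M N : Type*}
    [AddCommGroup L] [Module 𝕂 L] [FiniteDimensional 𝕂 L]
    [AddCommGroup M] [Module 𝕂 M] [FiniteDimensional 𝕂 M]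
    [AddCommGroup N] [Module 𝕂 N] [FiniteDimensional 𝕂 N]
    (DL : L → L) (hDL_add : ∀ x y : L, DL (x + y) = DL x + DL y)
    (hDL : ∀ (a : 𝕂) (x : L), DL (a • x) = δ𝕂 a • x + a • DL x)
    (DM : M → M) (hDM_add : ∀ x y : M, DM (x + y) = DM x + DM y)
    (hDM : ∀ (a : 𝕂) (x : M), DM (a • x) = δ𝕂 a • x + a • DM x)
    (DN : N → N) (hDN_add : ∀ x y : N, DN (x + y) = DN x + DN y)
    (hDN : ∀ (a : 𝕂) (x : N), DN (a • x) = δ𝕂 a • x + a • DN x)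
    -- a short exact sequence of differential modules
    (f : L →ₗ[𝕂] M) (g : M →ₗ[𝕂] N)
    (hfD : ∀ x : L, f (DL x) = DM (f x))
    (hgD : ∀ x : M, g (DM x) = DN (g x))
    (hf_inj : Function.Injective f)
    (hexact : LinearMap.range f = LinearMap.ker g)
    (hg_surj : Function.Surjective g)
    -- the operators D_K on K ⊗ L, K ⊗ M, K ⊗ N
    (DKL : K ⊗[𝕂] L → K ⊗[𝕂] L)
    (hDKL_add : ∀ x y, DKL (x + y) = DKL x + DKL y)
    (hDKL : ∀ (c : K) (x : L), DKL (c ⊗ₜ[𝕂] x) = δ c ⊗ₜ[𝕂] x + c ⊗ₜ[𝕂] DL x)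
    (DKM : K ⊗[𝕂] M → K ⊗[𝕂] M)
    (hDKM_add : ∀ x y, DKM (x + y) = DKM x + DKM y)
    (hDKM : ∀ (c : K) (x : M), DKM (c ⊗ₜ[𝕂] x) = δ c ⊗ₜ[𝕂] x + c ⊗ₜ[𝕂] DM x)
    (DKN : K ⊗[𝕂] N → K ⊗[𝕂] N)
    (hDKN_add : ∀ x y, DKN (x + y) = DKN x + DKN y)
    (hDKN : ∀ (c : K) (x : N), DKN (c ⊗ₜ[𝕂] x) = δ c ⊗ₜ[𝕂] x + c ⊗ₜ[𝕂] DN x)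
    -- the solution spaces, as k-vector spaces
    (SL : Submodule k (K ⊗[𝕂] L)) (hSL : ∀ x, x ∈ SL ↔ DKL x = 0)
    (SM : Submodule k (K ⊗[𝕂] M)) (hSM : ∀ x, x ∈ SM ↔ DKM x = 0)
    (SN : Submodule k (K ⊗[𝕂] N)) (hSN : ∀ x, x ∈ SN ↔ DKN x = 0)
    -- L, M, N have full solution spaces
    (hfullL : Module.finrank k SL = Module.finrank 𝕂 L)
    (hfullM : Module.finrank k SM = Module.finrank 𝕂 M)
    (hfullN : Module.finrank k SN = Module.finrank 𝕂 N) :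
    -- the induced maps restrict to the solution spaces ...
    (∀ x ∈ SL, LinearMap.lTensor K f x ∈ SM) ∧
    (∀ y ∈ SM, LinearMap.lTensor K g y ∈ SN) ∧
    -- ... and give an exact sequence 0 → Sol(L) → Sol(M) → Sol(N) → 0
    (∀ x ∈ SL, LinearMap.lTensor K f x = 0 → x = 0) ∧
    (∀ y ∈ SM, (LinearMap.lTensor K g y = 0 ↔ ∃ x ∈ SL, LinearMap.lTensor K f x = y)) ∧
    (∀ z ∈ SN, ∃ y ∈ SM, LinearMap.lTensor K g y = z) :=
  stmt_4_general δ k DL DM DN f g hfD hgD hf_inj hexact hg_surj DKL hDKL_add hDKL DKM hDKM_add hDKM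
    DKN hDKN_add hDKN SL hSL SM hSM SN hSN hfullL hfullM hfullN
end

section
/- Let M and N be differential modules over 𝕂, and give M ⊗_𝕂 N the differential module structure D(m⊗n) = D(m)⊗n + m⊗D(n). Assume that M and N have full solution spaces. Then the k-linear map Sol(M) ⊗_k Sol(N) → K ⊗_𝕂 (M ⊗_𝕂 N) induced by (f⊗m) ⊗ (g⊗n) ↦ fg ⊗ (m⊗n) is injective with image exactly Sol(M ⊗_𝕂 N); in particular Sol(M) ⊗_k Sol(N) ≅ Sol(M ⊗_𝕂 N) and M ⊗_𝕂 N has a full solution space. -/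
/-!
Horizontal vectors `v` (solutions, `D v = 0`) that are linearly independent over the
constants `k` stay linearly independent over `K`: differentiating a `K`-relation with fewest
nonzero coefficients, one of them normalised to `1`, gives a shorter relation, which must vanish,
so the coefficients are constants. Hence when `Sol(M)` is full, a `k`-basis of it is a `K`-basis
of `K ⊗ M`. The products of such bases for `M` and `N` form a `K`-basis of `K ⊗ (M ⊗ N)`
made of solutions (Leibniz rule), and for a `K`-basis of solutions the solutions are exactly its
`k`-span, because `D` acts on coordinates by `δ`. So `Φ` maps a `k`-basis of
`Sol(M) ⊗ Sol(N)` bijectively onto a `k`-basis of `Sol(M ⊗ N)`.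
-/

open TensorProduct

section Horizontal

open scoped Finset

variable {K V : Type*} [Field K] [AddCommGroup V] [Module K V] {δ : K → K} {k : Subfield K}
  {D : V →+ V}

theorem map_sum_smul_of_horizontal
    (hD : ∀ (c : K) (x : V), D (c • x) = δ c • x + c • D x)
    {ι : Type*} (s : Finset ι) (c : ι → K) {v : ι → V} (hv : ∀ i, D (v i) = 0) :
    D (∑ i ∈ s, c i • v i) = ∑ i ∈ s, δ (c i) • v i := by
  rw [map_sum]
  exact Finset.sum_congr rfl fun i _ => by rw [hD, hv, smul_zero, add_zero]

theorem linearIndependent_of_horizontal_of_fintype (hk : ∀ c, c ∈ k ↔ δ c = 0)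
    (hD : ∀ (c : K) (x : V), D (c • x) = δ c • x + c • D x)
    {ι : Type*} [Fintype ι] {v : ι → V} (hv : ∀ i, D (v i) = 0)
    (hli : LinearIndependent k v) : LinearIndependent K v := by
  classical
  rw [Fintype.linearIndependent_iff] at hli ⊢
  by_contra! hdep
  let S : Set (ι → K) := {g | ∑ i, g i • v i = 0 ∧ g ≠ 0}
  have hS : S.Nonempty := by
    obtain ⟨g, hg, i, hi⟩ := hdep
    exact ⟨g, hg, fun h => hi (congrFun h i)⟩
  -- a relation with the fewest nonzero coefficients
  obtain ⟨g, ⟨hg, hg0⟩, hmin⟩ :=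
    (measure fun g : ι → K => #{i | g i ≠ 0}).wf.has_min S hS
  obtain ⟨i, hi⟩ : ∃ i, g i ≠ 0 := Function.ne_iff.mp hg0
  let c : ι → K := (g i)⁻¹ • g
  have hc : ∑ j, c j • v j = 0 := by
    simp only [c, Pi.smul_apply, smul_eq_mul, mul_smul, ← Finset.smul_sum, hg, smul_zero]
  have hci : c i = 1 := inv_mul_cancel₀ hi
  have hδ0 : δ 0 = 0 := (hk 0).mp k.zero_mem
  have hδc : ∀ j, δ (c j) = 0 := by
    by_contra! hne
    refine hmin (fun j => δ (c j)) ⟨?_, Function.ne_iff.mpr hne⟩ ?_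
    · rw [← map_sum_smul_of_horizontal hD _ _ hv, hc, map_zero]
    · -- normalising `g i` to `1` kills the `i`-th coefficient of the derived relation
      have hsub : ({j | δ (c j) ≠ 0} : Finset ι) ⊆ ({j | g j ≠ 0} : Finset ι).erase i := by
        intro j
        simp only [Finset.mem_filter, Finset.mem_univ, true_and, Finset.mem_erase]
        intro hj
        refine ⟨fun hji => hj (hji ▸ hci ▸ (hk 1).mp k.one_mem), fun hgj => hj ?_⟩
        simp [c, hgj, hδ0]
      exact (Finset.card_le_card hsub).trans_lt
        (Finset.card_erase_lt_of_mem (by simpa using hi))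
  have hci0 := congrArg Subtype.val (hli (fun j => ⟨c j, (hk _).mpr (hδc j)⟩) hc i)
  exact one_ne_zero (hci.symm.trans hci0)

theorem linearIndependent_of_horizontal (hk : ∀ c, c ∈ k ↔ δ c = 0)
    (hD : ∀ (c : K) (x : V), D (c • x) = δ c • x + c • D x)
    {ι : Type*} {v : ι → V} (hv : ∀ i, D (v i) = 0)
    (hli : LinearIndependent k v) : LinearIndependent K v :=
  linearIndependent_iff_finset_linearIndependent.mpr fun _ =>
    linearIndependent_of_horizontal_of_fintype hk hD (fun i => hv i)
      (hli.comp _ Subtype.val_injective)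

theorem mem_span_iff_horizontal (hk : ∀ c, c ∈ k ↔ δ c = 0)
    (hD : ∀ (c : K) (x : V), D (c • x) = δ c • x + c • D x)
    {ι : Type*} (B : Module.Basis ι K V) (hB : ∀ i, D (B i) = 0) (x : V) :
    x ∈ Submodule.span k (Set.range B) ↔ D x = 0 := by
  have hδ0 : δ 0 = 0 := (hk 0).mp k.zero_mem
  have hDx : D x = Finsupp.linearCombination K B ((B.repr x).mapRange δ hδ0) := by
    conv_lhs => rw [← B.linearCombination_repr x]
    rw [Finsupp.linearCombination_apply, Finsupp.linearCombination_apply,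
      Finsupp.sum_mapRange_index fun i => zero_smul K (B i), Finsupp.sum, Finsupp.sum]
    exact map_sum_smul_of_horizontal hD _ _ hB
  rw [B.mem_span_iff_repr_mem k, hDx, ← map_zero (Finsupp.linearCombination K B),
    B.linearIndependent.eq_iff, Finsupp.ext_iff]
  refine forall_congr' fun i => ?_
  rw [Finsupp.mapRange_apply, Finsupp.zero_apply, ← hk]
  exact ⟨fun ⟨a, ha⟩ => ha ▸ a.2, fun h => ⟨⟨_, h⟩, rfl⟩⟩

theorem finiteDimensional_of_horizontal [FiniteDimensional K V] (hk : ∀ c, c ∈ k ↔ δ c = 0)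
    (hD : ∀ (c : K) (x : V), D (c • x) = δ c • x + c • D x)
    (S : Submodule k V) (hS : ∀ x ∈ S, D x = 0) : FiniteDimensional k S := by
  let b := Module.Free.chooseBasis k S
  have : Finite (Module.Free.ChooseBasisIndex k S) :=
    (linearIndependent_of_horizontal hk hD (fun i => hS _ (b i).2)
      (b.linearIndependent.map' S.subtype S.ker_subtype)).finite
  exact Module.Finite.of_basis b

theorem exists_basis_coe_eq_of_finrank_eq (hk : ∀ c, c ∈ k ↔ δ c = 0)
    (hD : ∀ (c : K) (x : V), D (c • x) = δ c • x + c • D x) [FiniteDimensional K V]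
    (S : Submodule k V) (hS : ∀ x ∈ S, D x = 0)
    (hfull : Module.finrank k S = Module.finrank K V) :
    ∃ (b : Module.Basis (Fin (Module.finrank K V)) k S)
      (B : Module.Basis (Fin (Module.finrank K V)) K V), ∀ i, B i = b i := by
  have := finiteDimensional_of_horizontal hk hD S hS
  let b := (Module.finBasis k S).reindex (finCongr hfull)
  have hb : LinearIndependent K fun i => (b i : V) :=
    linearIndependent_of_horizontal hk hD (fun i => hS _ (b i).2)
      (b.linearIndependent.map' S.subtype S.ker_subtype)
  exact ⟨b, basisOfLinearIndependentOfCardEqFinrank' _ hb (Fintype.card_fin _), fun i => by simp⟩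

theorem injective_and_range_eq_span_of_basis {X ι : Type*} [AddCommGroup X] [Module k X]
    (b : Module.Basis ι k X) (B : Module.Basis ι K V) (F : X →ₗ[k] V)
    (hF : ∀ i, F (b i) = B i) :
    Function.Injective F ∧ LinearMap.range F = Submodule.span k (Set.range B) := by
  obtain rfl : F = b.constr k B := b.ext fun i => by rw [b.constr_basis, hF]
  exact ⟨b.injective_constr_of_linearIndependent (B.linearIndependent.restrict_scalars' k),
    b.constr_range k⟩

end Horizontal

theorem baseChange_leibniz {R A V : Type*} [CommSemiring R] [Semiring A] [Algebra R A]
    [AddCommMonoid V] [Module R V] {δ : A → A} (hδ : ∀ a b, δ (a * b) = δ a * b + a * δ b)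
    {DV : V → V} (D : A ⊗[R] V →+ A ⊗[R] V)
    (hD : ∀ (a : A) (v : V), D (a ⊗ₜ v) = δ a ⊗ₜ v + a ⊗ₜ DV v)
    (a : A) (x : A ⊗[R] V) : D (a • x) = δ a • x + a • D x := by
  induction x using TensorProduct.induction_on with
  | zero => simp
  | tmul b v =>
    simp only [smul_tmul', smul_eq_mul, hD, hδ, add_tmul, smul_add]
    abel
  | add x y hx hy =>
    simp only [smul_add, map_add, hx, hy]
    abel

section TensorProduct

variable {K 𝕂 M N : Type*} [Field K] [Field 𝕂] [Algebra 𝕂 K] {k : Subfield K}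
  [AddCommGroup M] [Module 𝕂 M] [AddCommGroup N] [Module 𝕂 N]
  {Φ : (K ⊗[𝕂] M) ⊗[k] (K ⊗[𝕂] N) →ₗ[k] K ⊗[𝕂] (M ⊗[𝕂] N)}

theorem apply_tmul_eq_distribBaseChange_symm
    (hΦ : ∀ (f g : K) (m : M) (n : N),
      Φ ((f ⊗ₜ[𝕂] m) ⊗ₜ[k] (g ⊗ₜ[𝕂] n)) = (f * g) ⊗ₜ[𝕂] (m ⊗ₜ[𝕂] n))
    (x : K ⊗[𝕂] M) (y : K ⊗[𝕂] N) :
    Φ (x ⊗ₜ y) = (AlgebraTensorModule.distribBaseChange 𝕂 K M N).symm (x ⊗ₜ y) := by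
  induction x using TensorProduct.induction_on with
  | zero => simp
  | add x x' hx hx' => simp only [add_tmul, map_add, hx, hx']
  | tmul f m =>
    induction y using TensorProduct.induction_on with
    | zero => simp
    | add y y' hy hy' => simp only [tmul_add, map_add, hy, hy']
    | tmul g n => simp [hΦ, AlgebraTensorModule.distribBaseChange, smul_tmul', mul_comm]

theorem exists_basis_apply_eq_tmul
    (hΦ : ∀ (f g : K) (m : M) (n : N),
      Φ ((f ⊗ₜ[𝕂] m) ⊗ₜ[k] (g ⊗ₜ[𝕂] n)) = (f * g) ⊗ₜ[𝕂] (m ⊗ₜ[𝕂] n))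
    {ι κ : Type*} (BM : Module.Basis ι K (K ⊗[𝕂] M)) (BN : Module.Basis κ K (K ⊗[𝕂] N)) :
    ∃ B : Module.Basis (ι × κ) K (K ⊗[𝕂] (M ⊗[𝕂] N)), ∀ p, B p = Φ (BM p.1 ⊗ₜ BN p.2) :=
  ⟨(BM.tensorProduct BN).map (AlgebraTensorModule.distribBaseChange 𝕂 K M N).symm, fun p => by
    simp [Module.Basis.tensorProduct_apply', apply_tmul_eq_distribBaseChange_symm hΦ]⟩

theorem apply_tmul_leibniz {δ : K → K} (hδ : ∀ a b, δ (a * b) = δ a * b + a * δ b)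
    {DM : M → M} {DN : N → N} {DMN : M ⊗[𝕂] N → M ⊗[𝕂] N}
    (hDMN : ∀ m n, DMN (m ⊗ₜ n) = DM m ⊗ₜ n + m ⊗ₜ DN n)
    {DKM : K ⊗[𝕂] M →+ K ⊗[𝕂] M} (hDKM : ∀ c m, DKM (c ⊗ₜ m) = δ c ⊗ₜ m + c ⊗ₜ DM m)
    {DKN : K ⊗[𝕂] N →+ K ⊗[𝕂] N} (hDKN : ∀ c n, DKN (c ⊗ₜ n) = δ c ⊗ₜ n + c ⊗ₜ DN n)
    {DKMN : K ⊗[𝕂] (M ⊗[𝕂] N) →+ K ⊗[𝕂] (M ⊗[𝕂] N)}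
    (hDKMN : ∀ c x, DKMN (c ⊗ₜ x) = δ c ⊗ₜ x + c ⊗ₜ DMN x)
    (hΦ : ∀ (f g : K) (m : M) (n : N),
      Φ ((f ⊗ₜ[𝕂] m) ⊗ₜ[k] (g ⊗ₜ[𝕂] n)) = (f * g) ⊗ₜ[𝕂] (m ⊗ₜ[𝕂] n))
    (x : K ⊗[𝕂] M) (y : K ⊗[𝕂] N) :
    DKMN (Φ (x ⊗ₜ y)) = Φ (DKM x ⊗ₜ y) + Φ (x ⊗ₜ DKN y) := by
  induction x using TensorProduct.induction_on with
  | zero => simp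
  | add x x' hx hx' =>
    simp only [add_tmul, map_add, hx, hx']
    abel
  | tmul f m =>
    induction y using TensorProduct.induction_on with
    | zero => simp
    | add y y' hy hy' =>
      simp only [tmul_add, map_add, hy, hy']
      abel
    | tmul g n =>
      simp only [hΦ, hDKMN, hDMN, hDKM, hDKN, hδ, add_tmul, tmul_add, map_add]
      abel

end TensorProduct

theorem stmt_5_general {K 𝕂 : Type*} [Field K] [Field 𝕂] [Algebra 𝕂 K]
    (δ : K → K)
    (hδ_leibniz : ∀ a b : K, δ (a * b) = δ a * b + a * δ b)
    (k : Subfield K) (hk : ∀ c : K, c ∈ k ↔ δ c = 0)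
    -- the differential modules M, N over 𝕂
    {M N : Type*}
    [AddCommGroup M] [Module 𝕂 M] [FiniteDimensional 𝕂 M]
    [AddCommGroup N] [Module 𝕂 N] [FiniteDimensional 𝕂 N]
    (DM : M → M)
    (DN : N → N)
    -- the differential structure on M ⊗ N
    (DMN : M ⊗[𝕂] N → M ⊗[𝕂] N)
    (hDMN : ∀ (m : M) (n : N), DMN (m ⊗ₜ[𝕂] n) = DM m ⊗ₜ[𝕂] n + m ⊗ₜ[𝕂] DN n)
    -- the operators D_K
    (DKM : K ⊗[𝕂] M → K ⊗[𝕂] M)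
    (hDKM_add : ∀ x y, DKM (x + y) = DKM x + DKM y)
    (hDKM : ∀ (c : K) (x : M), DKM (c ⊗ₜ[𝕂] x) = δ c ⊗ₜ[𝕂] x + c ⊗ₜ[𝕂] DM x)
    (DKN : K ⊗[𝕂] N → K ⊗[𝕂] N)
    (hDKN_add : ∀ x y, DKN (x + y) = DKN x + DKN y)
    (hDKN : ∀ (c : K) (x : N), DKN (c ⊗ₜ[𝕂] x) = δ c ⊗ₜ[𝕂] x + c ⊗ₜ[𝕂] DN x)
    (DKMN : K ⊗[𝕂] (M ⊗[𝕂] N) → K ⊗[𝕂] (M ⊗[𝕂] N))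
    (hDKMN_add : ∀ x y, DKMN (x + y) = DKMN x + DKMN y)
    (hDKMN : ∀ (c : K) (x : M ⊗[𝕂] N), DKMN (c ⊗ₜ[𝕂] x) = δ c ⊗ₜ[𝕂] x + c ⊗ₜ[𝕂] DMN x)
    -- the solution spaces, as k-vector spaces
    (SM : Submodule k (K ⊗[𝕂] M)) (hSM : ∀ x, x ∈ SM ↔ DKM x = 0)
    (SN : Submodule k (K ⊗[𝕂] N)) (hSN : ∀ x, x ∈ SN ↔ DKN x = 0)
    (SMN : Submodule k (K ⊗[𝕂] (M ⊗[𝕂] N))) (hSMN : ∀ x, x ∈ SMN ↔ DKMN x = 0)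
    -- M and N have full solution spaces
    (hfullM : Module.finrank k SM = Module.finrank 𝕂 M)
    (hfullN : Module.finrank k SN = Module.finrank 𝕂 N)
    -- the canonical k-linear map (K ⊗ M) ⊗_k (K ⊗ N) → K ⊗ (M ⊗ N),
    -- (f ⊗ m) ⊗ (g ⊗ n) ↦ fg ⊗ (m ⊗ n)
    (Φ : (K ⊗[𝕂] M) ⊗[k] (K ⊗[𝕂] N) →ₗ[k] K ⊗[𝕂] (M ⊗[𝕂] N))
    (hΦ : ∀ (f g : K) (m : M) (n : N),
      Φ ((f ⊗ₜ[𝕂] m) ⊗ₜ[k] (g ⊗ₜ[𝕂] n)) = (f * g) ⊗ₜ[𝕂] (m ⊗ₜ[𝕂] n)) :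
    Function.Injective (Φ ∘ₗ TensorProduct.map SM.subtype SN.subtype) ∧
    LinearMap.range (Φ ∘ₗ TensorProduct.map SM.subtype SN.subtype) = SMN ∧
    Nonempty ((SM ⊗[k] SN) ≃ₗ[k] SMN) ∧
    Module.finrank k SMN = Module.finrank 𝕂 (M ⊗[𝕂] N) := by
  let dM := AddMonoidHom.mk' DKM hDKM_add
  let dN := AddMonoidHom.mk' DKN hDKN_add
  let dMN := AddMonoidHom.mk' DKMN hDKMN_add
  have hSM' : ∀ x ∈ SM, dM x = 0 := fun x => (hSM x).mp
  have hSN' : ∀ x ∈ SN, dN x = 0 := fun x => (hSN x).mp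
  obtain ⟨bM, BM, hBM⟩ := exists_basis_coe_eq_of_finrank_eq hk
    (baseChange_leibniz hδ_leibniz dM hDKM) SM hSM'
    (by rw [hfullM, Module.finrank_baseChange])
  obtain ⟨bN, BN, hBN⟩ := exists_basis_coe_eq_of_finrank_eq hk
    (baseChange_leibniz hδ_leibniz dN hDKN) SN hSN'
    (by rw [hfullN, Module.finrank_baseChange])
  obtain ⟨B, hB⟩ := exists_basis_apply_eq_tmul hΦ BM BN
  have hB_sol : ∀ p, dMN (B p) = 0 := fun p => by
    rw [hB, apply_tmul_leibniz hδ_leibniz hDMN (DKM := dM) hDKM (DKN := dN) hDKN hDKMN hΦ,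
      hBM, hBN, hSM' _ (bM p.1).2, hSN' _ (bN p.2).2, zero_tmul, tmul_zero, map_zero,
      add_zero]
  obtain ⟨hinj, hspan⟩ := injective_and_range_eq_span_of_basis (bM.tensorProduct bN) B
    (Φ ∘ₗ TensorProduct.map SM.subtype SN.subtype) fun p => by
      rw [hB, hBM, hBN, Module.Basis.tensorProduct_apply']
      rfl
  have hrange : LinearMap.range (Φ ∘ₗ TensorProduct.map SM.subtype SN.subtype) = SMN :=
    hspan.trans <| Submodule.ext fun x => (mem_span_iff_horizontal hk
      (baseChange_leibniz hδ_leibniz dMN hDKMN) B hB_sol x).trans (hSMN x).symm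
  let e := (LinearEquiv.ofInjective _ hinj).trans (LinearEquiv.ofEq _ _ hrange)
  refine ⟨hinj, hrange, ⟨e⟩, ?_⟩
  rw [Module.finrank_eq_card_basis ((bM.tensorProduct bN).map e), Fintype.card_prod,
    Fintype.card_fin, Fintype.card_fin, Module.finrank_baseChange, Module.finrank_baseChange,
    Module.finrank_tensorProduct]

/-- with `K/𝕂`, `δ`, constants `k` as usual, if `M, N` are differential
`𝕂`-modules with full solution spaces, and `M ⊗ N` carries the structure
`D(m ⊗ n) = Dm ⊗ n + m ⊗ Dn`, then the canonical `k`-linear map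
`Sol(M) ⊗_k Sol(N) → K ⊗ (M ⊗ N)` induced by `(f ⊗ m) ⊗ (g ⊗ n) ↦ fg ⊗ (m ⊗ n)`
is injective with image exactly `Sol(M ⊗ N)`; in particular
`Sol(M) ⊗_k Sol(N) ≅ Sol(M ⊗ N)` and `M ⊗ N` has a full solution space. -/
theorem stmt_5 {K 𝕂 : Type*} [Field K] [Field 𝕂] [Algebra 𝕂 K] [CharZero K]
    (δ : K → K)
    (hδ_add : ∀ a b : K, δ (a + b) = δ a + δ b)
    (hδ_leibniz : ∀ a b : K, δ (a * b) = δ a * b + a * δ b)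
    (δ𝕂 : 𝕂 → 𝕂)
    (hcompat : ∀ a : 𝕂, δ (algebraMap 𝕂 K a) = algebraMap 𝕂 K (δ𝕂 a))
    (k : Subfield K) (hk : ∀ c : K, c ∈ k ↔ δ c = 0)
    -- the differential modules M, N over 𝕂
    {M N : Type*}
    [AddCommGroup M] [Module 𝕂 M] [FiniteDimensional 𝕂 M]
    [AddCommGroup N] [Module 𝕂 N] [FiniteDimensional 𝕂 N]
    (DM : M → M) (hDM_add : ∀ x y : M, DM (x + y) = DM x + DM y)
    (hDM : ∀ (a : 𝕂) (x : M), DM (a • x) = δ𝕂 a • x + a • DM x)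
    (DN : N → N) (hDN_add : ∀ x y : N, DN (x + y) = DN x + DN y)
    (hDN : ∀ (a : 𝕂) (x : N), DN (a • x) = δ𝕂 a • x + a • DN x)
    -- the differential structure on M ⊗ N
    (DMN : M ⊗[𝕂] N → M ⊗[𝕂] N)
    (hDMN_add : ∀ x y, DMN (x + y) = DMN x + DMN y)
    (hDMN : ∀ (m : M) (n : N), DMN (m ⊗ₜ[𝕂] n) = DM m ⊗ₜ[𝕂] n + m ⊗ₜ[𝕂] DN n)
    -- the operators D_K
    (DKM : K ⊗[𝕂] M → K ⊗[𝕂] M)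
    (hDKM_add : ∀ x y, DKM (x + y) = DKM x + DKM y)
    (hDKM : ∀ (c : K) (x : M), DKM (c ⊗ₜ[𝕂] x) = δ c ⊗ₜ[𝕂] x + c ⊗ₜ[𝕂] DM x)
    (DKN : K ⊗[𝕂] N → K ⊗[𝕂] N)
    (hDKN_add : ∀ x y, DKN (x + y) = DKN x + DKN y)
    (hDKN : ∀ (c : K) (x : N), DKN (c ⊗ₜ[𝕂] x) = δ c ⊗ₜ[𝕂] x + c ⊗ₜ[𝕂] DN x)
    (DKMN : K ⊗[𝕂] (M ⊗[𝕂] N) → K ⊗[𝕂] (M ⊗[𝕂] N))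
    (hDKMN_add : ∀ x y, DKMN (x + y) = DKMN x + DKMN y)
    (hDKMN : ∀ (c : K) (x : M ⊗[𝕂] N), DKMN (c ⊗ₜ[𝕂] x) = δ c ⊗ₜ[𝕂] x + c ⊗ₜ[𝕂] DMN x)
    -- the solution spaces, as k-vector spaces
    (SM : Submodule k (K ⊗[𝕂] M)) (hSM : ∀ x, x ∈ SM ↔ DKM x = 0)
    (SN : Submodule k (K ⊗[𝕂] N)) (hSN : ∀ x, x ∈ SN ↔ DKN x = 0)
    (SMN : Submodule k (K ⊗[𝕂] (M ⊗[𝕂] N))) (hSMN : ∀ x, x ∈ SMN ↔ DKMN x = 0)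
    -- M and N have full solution spaces
    (hfullM : Module.finrank k SM = Module.finrank 𝕂 M)
    (hfullN : Module.finrank k SN = Module.finrank 𝕂 N)
    -- the canonical k-linear map (K ⊗ M) ⊗_k (K ⊗ N) → K ⊗ (M ⊗ N),
    -- (f ⊗ m) ⊗ (g ⊗ n) ↦ fg ⊗ (m ⊗ n)
    (Φ : (K ⊗[𝕂] M) ⊗[k] (K ⊗[𝕂] N) →ₗ[k] K ⊗[𝕂] (M ⊗[𝕂] N))
    (hΦ : ∀ (f g : K) (m : M) (n : N),
      Φ ((f ⊗ₜ[𝕂] m) ⊗ₜ[k] (g ⊗ₜ[𝕂] n)) = (f * g) ⊗ₜ[𝕂] (m ⊗ₜ[𝕂] n)) :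
    Function.Injective (Φ ∘ₗ TensorProduct.map SM.subtype SN.subtype) ∧
    LinearMap.range (Φ ∘ₗ TensorProduct.map SM.subtype SN.subtype) = SMN ∧
    Nonempty ((SM ⊗[k] SN) ≃ₗ[k] SMN) ∧
    Module.finrank k SMN = Module.finrank 𝕂 (M ⊗[𝕂] N) :=
  stmt_5_general δ hδ_leibniz k hk DM DN DMN hDMN DKM hDKM_add hDKM DKN hDKN_add hDKN DKMN hDKMN_add
    hDKMN SM hSM SN hSN SMN hSMN hfullM hfullN Φ hΦ
end

section
/- Let M and N be differential modules over 𝕂 and give Hom_𝕂(M, N) the differential module structure D(φ) := D_N ∘ φ − φ ∘ D_M. Identify K ⊗_𝕂 Hom_𝕂(M,N) with Hom_K(K ⊗_𝕂 M, K ⊗_𝕂 N) in the natural way. Assume M and N have full solution spaces. Then every element of Sol(Hom_𝕂(M,N)), viewed as a K-linear map K ⊗_𝕂 M → K ⊗_𝕂 N, commutes with the operators D_K and maps Sol(M) into Sol(N), and the resulting k-linear map Sol(Hom_𝕂(M,N)) → Hom_k(Sol(M), Sol(N)) is an isomorphism. -/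
/-!
Since `Φ (D h) = D ∘ Φ h - Φ h ∘ D`, the solutions of `Hom(M, N)` are exactly the `K`-linear maps
commuting with `D_K`, and these preserve solutions. Solutions that are linearly independent over
the constants stay so over `K`: if `v₀ = ∑ cᵢ vᵢ` with the `vᵢ` independent over `K`, applying `D`
gives `∑ δ(cᵢ) vᵢ = 0`, so every `cᵢ` is a constant. Hence, when `dim_k Sol(M) = dim_𝕂 M`, a
`k`-basis of `Sol(M)` is a `K`-basis of `K ⊗ M`: a `K`-linear map is determined by its values on
`Sol(M)`, and every `k`-linear map `Sol(M) → Sol(N)` extends to a `K`-linear map, which commutes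
with `D_K` because it does so on a basis of solutions.
-/

open TensorProduct Module Submodule

section Constants

variable {K V : Type*} [DivisionRing K] [AddCommGroup V] [Module K V] {δ : K → K} {k : Subfield K}

theorem mem_span_constants_of_mem_span (hk : ∀ c, δ c = 0 → c ∈ k) (D : V →+ V)
    (hD : ∀ (a : K) (x : V), D (a • x) = δ a • x + a • D x) {ι : Type*} [Fintype ι] {v : ι → V}
    (hv : ∀ i, D (v i) = 0) (hvK : LinearIndependent K v) {x : V} (hx : D x = 0)
    (hxv : x ∈ span K (Set.range v)) : x ∈ span k (Set.range v) := by
  obtain ⟨c, rfl⟩ := (mem_span_range_iff_exists_fun K).mp hxv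
  have hδc : ∀ i, δ (c i) = 0 := by
    refine Fintype.linearIndependent_iff.mp hvK _ ?_
    simpa [map_sum, hD, hv] using hx
  exact (mem_span_range_iff_exists_fun k).mpr ⟨fun i => ⟨c i, hk _ (hδc i)⟩, rfl⟩

theorem linearIndependent_of_constants_fin (hk : ∀ c, δ c = 0 → c ∈ k) (D : V →+ V)
    (hD : ∀ (a : K) (x : V), D (a • x) = δ a • x + a • D x) {n : ℕ} {v : Fin n → V}
    (hv : ∀ i, D (v i) = 0) (hvk : LinearIndependent k v) : LinearIndependent K v := by
  induction n with
  | zero => exact linearIndependent_empty_type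
  | succ n ih =>
    rw [linearIndependent_finSucc] at hvk ⊢
    have htail : LinearIndependent K (Fin.tail v) := ih (fun i => hv i.succ) hvk.1
    exact ⟨htail, fun h0 => hvk.2 <| mem_span_constants_of_mem_span hk D hD (v := Fin.tail v)
      (fun i => hv i.succ) htail (hv 0) h0⟩

theorem linearIndependent_of_constants (hk : ∀ c, δ c = 0 → c ∈ k) (D : V →+ V)
    (hD : ∀ (a : K) (x : V), D (a • x) = δ a • x + a • D x) {ι : Type*} {v : ι → V}
    (hv : ∀ i, D (v i) = 0) (hvk : LinearIndependent k v) : LinearIndependent K v := by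
  rw [linearIndependent_iff_finset_linearIndependent] at hvk ⊢
  intro s
  have hfin := linearIndependent_of_constants_fin hk D hD (fun i => hv _)
    ((hvk s).comp _ s.equivFin.symm.injective)
  simpa [Function.comp_def] using hfin.comp _ s.equivFin.injective

variable [FiniteDimensional K V] {S : Submodule k V}

theorem exists_basis_of_finrank_solutions (hk : ∀ c, δ c = 0 → c ∈ k) (D : V →+ V)
    (hD : ∀ (a : K) (x : V), D (a • x) = δ a • x + a • D x) (hS : ∀ x ∈ S, D x = 0)
    (hfull : finrank k S = finrank K V) :
    ∃ (n : ℕ) (b : Basis (Fin n) k S) (B : Basis (Fin n) K V), ∀ i, B i = b i := by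
  -- `finrank k S = 0` also when `S` is infinite-dimensional; then `V = 0` rules this out.
  have : Module.Finite k S := by
    rcases (finrank K V).eq_zero_or_pos with h0 | hpos
    · have : Subsingleton V := finrank_zero_iff.mp h0
      infer_instance
    · exact Module.finite_of_finrank_pos (hfull ▸ hpos)
  let b := finBasis k S
  have hbK : LinearIndependent K (fun i => (b i : V)) :=
    linearIndependent_of_constants hk D hD (fun i => hS _ (b i).2)
      (b.linearIndependent.map' S.subtype S.ker_subtype)
  exact ⟨_, b, basisOfLinearIndependentOfCardEqFinrank' _ hbK (by simpa using hfull),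
    fun _ => by simp⟩

theorem span_eq_top_of_finrank_solutions (hk : ∀ c, δ c = 0 → c ∈ k) (D : V →+ V)
    (hD : ∀ (a : K) (x : V), D (a • x) = δ a • x + a • D x) (hS : ∀ x ∈ S, D x = 0)
    (hfull : finrank k S = finrank K V) : span K (S : Set V) = ⊤ := by
  obtain ⟨n, b, B, hB⟩ := exists_basis_of_finrank_solutions hk D hD hS hfull
  refine eq_top_iff.mpr (B.span_eq ▸ span_mono ?_)
  rintro _ ⟨i, rfl⟩
  exact hB i ▸ (b i).2

theorem exists_extension_of_finrank_solutions (hk : ∀ c, δ c = 0 → c ∈ k) (D : V →+ V)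
    (hD : ∀ (a : K) (x : V), D (a • x) = δ a • x + a • D x) (hS : ∀ x ∈ S, D x = 0)
    (hfull : finrank k S = finrank K V) {W : Type*} [AddCommGroup W] [Module K W]
    (L : S →ₗ[k] W) : ∃ T : V →ₗ[K] W, ∀ x : S, T x = L x := by
  obtain ⟨n, b, B, hB⟩ := exists_basis_of_finrank_solutions hk D hD hS hfull
  let T := B.constr ℕ fun i => L (b i)
  have hT : (T.restrictScalars k).comp S.subtype = L :=
    b.ext fun i => by simp [← hB, T]
  exact ⟨T, LinearMap.congr_fun hT⟩

end Constants

section BaseChange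

theorem leibniz_smul_of_leibniz_tmul {R A M : Type*} [CommSemiring R] [CommSemiring A] [Algebra R A]
    [AddCommMonoid M] [Module R M] {δ : A → A} (hδ : ∀ a b : A, δ (a * b) = δ a * b + a * δ b)
    {DM : M → M} (D : A ⊗[R] M →+ A ⊗[R] M) (hD : ∀ (c : A) (m : M), D (c ⊗ₜ m) = δ c ⊗ₜ m + c ⊗ₜ DM m)
    (a : A) (x : A ⊗[R] M) : D (a • x) = δ a • x + a • D x := by
  induction x using TensorProduct.induction_on with
  | zero => simp
  | tmul c m => simp only [smul_tmul', smul_eq_mul, hD, hδ, add_tmul, smul_add]; abel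
  | add x y hx hy => simp only [smul_add, map_add, hx, hy]; abel

variable {R A M N : Type*} [CommRing R] [CommRing A] [Algebra R A]
  [AddCommGroup M] [Module R M] [AddCommGroup N] [Module R N] {δ : A → A}

theorem apply_derivative_hom_eq_commutator (hδ : ∀ a b : A, δ (a * b) = δ a * b + a * δ b)
    {DM : M → M} {DN : N → N} {DH : (M →ₗ[R] N) → (M →ₗ[R] N)}
    (hDH : ∀ (φ : M →ₗ[R] N) (m : M), DH φ m = DN (φ m) - φ (DM m))
    (DKM : A ⊗[R] M →+ A ⊗[R] M) (hDKM : ∀ (c : A) (m : M), DKM (c ⊗ₜ m) = δ c ⊗ₜ m + c ⊗ₜ DM m)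
    (DKN : A ⊗[R] N →+ A ⊗[R] N) (hDKN : ∀ (c : A) (n : N), DKN (c ⊗ₜ n) = δ c ⊗ₜ n + c ⊗ₜ DN n)
    (DKH : A ⊗[R] (M →ₗ[R] N) →+ A ⊗[R] (M →ₗ[R] N))
    (hDKH : ∀ (c : A) (φ : M →ₗ[R] N), DKH (c ⊗ₜ φ) = δ c ⊗ₜ φ + c ⊗ₜ DH φ)
    (Φ : A ⊗[R] (M →ₗ[R] N) →ₗ[A] (A ⊗[R] M →ₗ[A] A ⊗[R] N))
    (hΦ : ∀ (f g : A) (φ : M →ₗ[R] N) (m : M), Φ (f ⊗ₜ φ) (g ⊗ₜ m) = (f * g) ⊗ₜ φ m)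
    (η : A ⊗[R] (M →ₗ[R] N)) (x : A ⊗[R] M) :
    Φ (DKH η) x = DKN (Φ η x) - Φ η (DKM x) := by
  induction η using TensorProduct.induction_on generalizing x with
  | zero => simp
  | add η₁ η₂ h₁ h₂ => simp only [map_add, LinearMap.add_apply, h₁, h₂]; abel
  | tmul c φ =>
    induction x using TensorProduct.induction_on with
    | zero => simp
    | add x y hx hy => simp only [map_add, hx, hy]; abel
    | tmul g m =>
      simp only [hDKH, hDKM, hDKN, map_add, LinearMap.add_apply, hΦ, hDH, hδ, add_tmul, tmul_sub]
      abel

end BaseChange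

theorem stmt_8_general {K 𝕂 : Type*} [Field K] [Field 𝕂] [Algebra 𝕂 K]
    (δ : K → K)
    (hδ_leibniz : ∀ a b : K, δ (a * b) = δ a * b + a * δ b)
    (k : Subfield K) (hk : ∀ c : K, c ∈ k ↔ δ c = 0)
    -- the differential modules M, N over 𝕂
    {M N : Type*}
    [AddCommGroup M] [Module 𝕂 M] [FiniteDimensional 𝕂 M]
    [AddCommGroup N] [Module 𝕂 N]
    (DM : M → M)
    (DN : N → N)
    -- the differential structure on Hom_𝕂(M, N)
    (DH : (M →ₗ[𝕂] N) → (M →ₗ[𝕂] N))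
    (hDH : ∀ (φ : M →ₗ[𝕂] N) (m : M), DH φ m = DN (φ m) - φ (DM m))
    -- the operators D_K on K ⊗ M, K ⊗ N, K ⊗ Hom_𝕂(M,N)
    (DKM : K ⊗[𝕂] M → K ⊗[𝕂] M)
    (hDKM_add : ∀ x y, DKM (x + y) = DKM x + DKM y)
    (hDKM : ∀ (c : K) (x : M), DKM (c ⊗ₜ[𝕂] x) = δ c ⊗ₜ[𝕂] x + c ⊗ₜ[𝕂] DM x)
    (DKN : K ⊗[𝕂] N → K ⊗[𝕂] N)
    (hDKN_add : ∀ x y, DKN (x + y) = DKN x + DKN y)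
    (hDKN : ∀ (c : K) (x : N), DKN (c ⊗ₜ[𝕂] x) = δ c ⊗ₜ[𝕂] x + c ⊗ₜ[𝕂] DN x)
    (DKH : K ⊗[𝕂] (M →ₗ[𝕂] N) → K ⊗[𝕂] (M →ₗ[𝕂] N))
    (hDKH_add : ∀ x y, DKH (x + y) = DKH x + DKH y)
    (hDKH : ∀ (c : K) (φ : M →ₗ[𝕂] N), DKH (c ⊗ₜ[𝕂] φ) = δ c ⊗ₜ[𝕂] φ + c ⊗ₜ[𝕂] DH φ)
    -- the natural identification K ⊗ Hom_𝕂(M,N) ≅ Hom_K(K ⊗ M, K ⊗ N)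
    (Φ : K ⊗[𝕂] (M →ₗ[𝕂] N) →ₗ[K] ((K ⊗[𝕂] M) →ₗ[K] (K ⊗[𝕂] N)))
    (hΦ : ∀ (f g : K) (φ : M →ₗ[𝕂] N) (m : M),
      Φ (f ⊗ₜ[𝕂] φ) (g ⊗ₜ[𝕂] m) = (f * g) ⊗ₜ[𝕂] φ m)
    (hΦ_bij : Function.Bijective Φ)
    -- the solution spaces
    (SM : Submodule k (K ⊗[𝕂] M)) (hSM : ∀ x, x ∈ SM ↔ DKM x = 0)
    (SN : Submodule k (K ⊗[𝕂] N)) (hSN : ∀ x, x ∈ SN ↔ DKN x = 0)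
    (SH : Submodule k (K ⊗[𝕂] (M →ₗ[𝕂] N))) (hSH : ∀ x, x ∈ SH ↔ DKH x = 0)
    -- M and N have full solution spaces
    (hfullM : Module.finrank k SM = Module.finrank 𝕂 M) :
    -- solutions commute with the D_K's ...
    (∀ h ∈ SH, ∀ x : K ⊗[𝕂] M, Φ h (DKM x) = DKN (Φ h x)) ∧
    -- ... map Sol(M) into Sol(N) ...
    (∀ h ∈ SH, ∀ v ∈ SM, Φ h v ∈ SN) ∧
    -- ... and the induced k-linear map Sol(Hom(M,N)) → Hom_k(Sol(M), Sol(N)) is bijective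
    (∀ h ∈ SH, (∀ v ∈ SM, Φ h v = 0) → h = 0) ∧
    (∀ L : SM →ₗ[k] SN, ∃ h ∈ SH, ∀ (v : K ⊗[𝕂] M) (hv : v ∈ SM),
      Φ h v = (L ⟨v, hv⟩ : K ⊗[𝕂] N)) := by
  let DKM' : K ⊗[𝕂] M →+ K ⊗[𝕂] M := .mk' DKM hDKM_add
  let DKN' : K ⊗[𝕂] N →+ K ⊗[𝕂] N := .mk' DKN hDKN_add
  have hcomm : ∀ η x, Φ (DKH η) x = DKN (Φ η x) - Φ η (DKM x) :=
    apply_derivative_hom_eq_commutator hδ_leibniz hDH DKM' hDKM DKN' hDKN (.mk' DKH hDKH_add) hDKH Φ hΦ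
  have hfull : finrank k SM = finrank K (K ⊗[𝕂] M) := by rw [hfullM, finrank_baseChange]
  have hsol : ∀ x ∈ SM, DKM' x = 0 := fun x => (hSM x).mp
  have hkδ : ∀ c, δ c = 0 → c ∈ k := fun c => (hk c).mpr
  have hDKM_smul := leibniz_smul_of_leibniz_tmul hδ_leibniz DKM' hDKM
  have hspan := span_eq_top_of_finrank_solutions hkδ DKM' hDKM_smul hsol hfull
  have hcommute : ∀ h ∈ SH, ∀ x, Φ h (DKM x) = DKN (Φ h x) := fun h hh x => by
    have h0 : DKN (Φ h x) - Φ h (DKM x) = 0 := by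
      rw [← hcomm, (hSH h).mp hh, map_zero, LinearMap.zero_apply]
    exact (sub_eq_zero.mp h0).symm
  refine ⟨hcommute, fun h hh v hv => ?_, fun h _ hv => ?_, fun L => ?_⟩
  · rw [hSN, ← hcommute h hh v, (hSM v).mp hv, map_zero]
  · exact hΦ_bij.injective ((LinearMap.ext_on (g := 0) hspan hv).trans (map_zero Φ).symm)
  · obtain ⟨T, hT⟩ :=
      exists_extension_of_finrank_solutions hkδ DKM' hDKM_smul hsol hfull (SN.subtype ∘ₗ L)
    obtain ⟨h, rfl⟩ := hΦ_bij.surjective T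
    refine ⟨h, (hSH h).mpr (hΦ_bij.injective ?_), fun v hv => hT ⟨v, hv⟩⟩
    refine (LinearMap.ext_on hspan fun v hv => ?_).trans (map_zero Φ).symm
    rw [hcomm, hT ⟨v, hv⟩, (hSM v).mp hv, map_zero, sub_zero, LinearMap.zero_apply]
    exact (hSN _).mp (L ⟨v, hv⟩).2

/-- with `K/𝕂`, `δ`, constants `k` as usual, let `M, N` be differential
`𝕂`-modules with full solution spaces and give `Hom_𝕂(M,N)` the structure
`D(φ) = D_N ∘ φ - φ ∘ D_M`. Identifying `K ⊗ Hom_𝕂(M,N)` with `Hom_K(K ⊗ M, K ⊗ N)` via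
the natural map `Φ`, every `h ∈ Sol(Hom_𝕂(M,N))` commutes with the operators `D_K` and maps
`Sol(M)` into `Sol(N)`, and the resulting `k`-linear map
`Sol(Hom_𝕂(M,N)) → Hom_k(Sol(M), Sol(N))` is an isomorphism. -/
theorem stmt_8 {K 𝕂 : Type*} [Field K] [Field 𝕂] [Algebra 𝕂 K] [CharZero K]
    (δ : K → K)
    (hδ_add : ∀ a b : K, δ (a + b) = δ a + δ b)
    (hδ_leibniz : ∀ a b : K, δ (a * b) = δ a * b + a * δ b)
    (δ𝕂 : 𝕂 → 𝕂)
    (hcompat : ∀ a : 𝕂, δ (algebraMap 𝕂 K a) = algebraMap 𝕂 K (δ𝕂 a))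
    (k : Subfield K) (hk : ∀ c : K, c ∈ k ↔ δ c = 0)
    -- the differential modules M, N over 𝕂
    {M N : Type*}
    [AddCommGroup M] [Module 𝕂 M] [FiniteDimensional 𝕂 M]
    [AddCommGroup N] [Module 𝕂 N] [FiniteDimensional 𝕂 N]
    (DM : M → M) (hDM_add : ∀ x y : M, DM (x + y) = DM x + DM y)
    (hDM : ∀ (a : 𝕂) (x : M), DM (a • x) = δ𝕂 a • x + a • DM x)
    (DN : N → N) (hDN_add : ∀ x y : N, DN (x + y) = DN x + DN y)
    (hDN : ∀ (a : 𝕂) (x : N), DN (a • x) = δ𝕂 a • x + a • DN x)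
    -- the differential structure on Hom_𝕂(M, N)
    (DH : (M →ₗ[𝕂] N) → (M →ₗ[𝕂] N))
    (hDH_add : ∀ φ ψ, DH (φ + ψ) = DH φ + DH ψ)
    (hDH : ∀ (φ : M →ₗ[𝕂] N) (m : M), DH φ m = DN (φ m) - φ (DM m))
    -- the operators D_K on K ⊗ M, K ⊗ N, K ⊗ Hom_𝕂(M,N)
    (DKM : K ⊗[𝕂] M → K ⊗[𝕂] M)
    (hDKM_add : ∀ x y, DKM (x + y) = DKM x + DKM y)
    (hDKM : ∀ (c : K) (x : M), DKM (c ⊗ₜ[𝕂] x) = δ c ⊗ₜ[𝕂] x + c ⊗ₜ[𝕂] DM x)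
    (DKN : K ⊗[𝕂] N → K ⊗[𝕂] N)
    (hDKN_add : ∀ x y, DKN (x + y) = DKN x + DKN y)
    (hDKN : ∀ (c : K) (x : N), DKN (c ⊗ₜ[𝕂] x) = δ c ⊗ₜ[𝕂] x + c ⊗ₜ[𝕂] DN x)
    (DKH : K ⊗[𝕂] (M →ₗ[𝕂] N) → K ⊗[𝕂] (M →ₗ[𝕂] N))
    (hDKH_add : ∀ x y, DKH (x + y) = DKH x + DKH y)
    (hDKH : ∀ (c : K) (φ : M →ₗ[𝕂] N), DKH (c ⊗ₜ[𝕂] φ) = δ c ⊗ₜ[𝕂] φ + c ⊗ₜ[𝕂] DH φ)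
    -- the natural identification K ⊗ Hom_𝕂(M,N) ≅ Hom_K(K ⊗ M, K ⊗ N)
    (Φ : K ⊗[𝕂] (M →ₗ[𝕂] N) →ₗ[K] ((K ⊗[𝕂] M) →ₗ[K] (K ⊗[𝕂] N)))
    (hΦ : ∀ (f g : K) (φ : M →ₗ[𝕂] N) (m : M),
      Φ (f ⊗ₜ[𝕂] φ) (g ⊗ₜ[𝕂] m) = (f * g) ⊗ₜ[𝕂] φ m)
    (hΦ_bij : Function.Bijective Φ)
    -- the solution spaces
    (SM : Submodule k (K ⊗[𝕂] M)) (hSM : ∀ x, x ∈ SM ↔ DKM x = 0)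
    (SN : Submodule k (K ⊗[𝕂] N)) (hSN : ∀ x, x ∈ SN ↔ DKN x = 0)
    (SH : Submodule k (K ⊗[𝕂] (M →ₗ[𝕂] N))) (hSH : ∀ x, x ∈ SH ↔ DKH x = 0)
    -- M and N have full solution spaces
    (hfullM : Module.finrank k SM = Module.finrank 𝕂 M)
    (hfullN : Module.finrank k SN = Module.finrank 𝕂 N) :
    -- solutions commute with the D_K's ...
    (∀ h ∈ SH, ∀ x : K ⊗[𝕂] M, Φ h (DKM x) = DKN (Φ h x)) ∧
    -- ... map Sol(M) into Sol(N) ...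
    (∀ h ∈ SH, ∀ v ∈ SM, Φ h v ∈ SN) ∧
    -- ... and the induced k-linear map Sol(Hom(M,N)) → Hom_k(Sol(M), Sol(N)) is bijective
    (∀ h ∈ SH, (∀ v ∈ SM, Φ h v = 0) → h = 0) ∧
    (∀ L : SM →ₗ[k] SN, ∃ h ∈ SH, ∀ (v : K ⊗[𝕂] M) (hv : v ∈ SM),
      Φ h v = (L ⟨v, hv⟩ : K ⊗[𝕂] N)) :=
  stmt_8_general δ hδ_leibniz k hk DM DN DH hDH DKM hDKM_add hDKM DKN hDKN_add hDKN DKH hDKH_add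
    hDKH Φ hΦ hΦ_bij SM hSM SN hSN SH hSH hfullM
end
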